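/- Let |I| be a measurable cardinal, U a non-principal ω-complete ultrafilter on I, and X_i = (X_i, ρ_i) nonempty binary structures. Then the ultraproduct ∏_U X_i is connected if and only if {i ∈ I : X_i is connected} ∈ U. -/

import Mathlib

/-- Reflexivization of a binary relation. -/
def rRefl {X : Type*} (ρ : X → X → Prop) : X → X → Prop := fun a b => ρ a b ∨ a = b

/-- Signed step: `ρ` for `false`, `ρ⁻¹` for `true` (after reflexivizing). -/
def rStep {X : Type*} (ρ : X → X → Prop) : Bool → X → X → Prop :=
  fun e a b => if e then rRefl ρ b a else rRefl ρ a b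

/-- `(z, ε)` is a path of length `n+1` from `x` to `y`. -/
def pathPts {X : Type*} {n : ℕ} (x y : X) (z : Fin n → X) : Fin (n + 2) → X :=
  Fin.cons x (Fin.snoc z y)

def IsPath {X : Type*} (ρ : X → X → Prop) {n : ℕ} (z : Fin n → X)
    (ε : Fin (n + 1) → Bool) (x y : X) : Prop :=
  ∀ k : Fin (n + 1), rStep ρ (ε k) (pathPts x y z k.castSucc) (pathPts x y z k.succ)

/-- There is a path of length `≤ n+1` from `x` to `y`. -/
def dLE {X : Type*} (ρ : X → X → Prop) (n : ℕ) (x y : X) : Prop :=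
  ∃ m, m ≤ n ∧ ∃ z : Fin m → X, ∃ ε : Fin (m + 1) → Bool, IsPath ρ z ε x y

/-- A binary structure is connected iff any two points are joined by a finite path. -/
def Conn {X : Type*} (ρ : X → X → Prop) : Prop := ∀ x y : X, ∃ n, dLE ρ n x y

/-- The setoid of a reduced product: agreement on a set in the filter. -/
def redSetoid {I : Type*} (Φ : Filter I) (X : I → Type*) : Setoid (∀ i, X i) where
  r x y := {i | x i = y i} ∈ Φ
  iseqv := by
    refine ⟨fun x => ?_, fun h => ?_, fun h1 h2 => ?_⟩
    · simpa using Filter.univ_mem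
    · filter_upwards [h] with i e using e.symm
    · filter_upwards [h1, h2] with i e1 e2 using e1.trans e2

/-- The relation of the reduced product. -/
def redRel {I : Type*} (Φ : Filter I) {X : I → Type*} (ρ : ∀ i, X i → X i → Prop) :
    Quotient (redSetoid Φ X) → Quotient (redSetoid Φ X) → Prop :=
  Quotient.lift₂ (fun x y => {i | ρ i (x i) (y i)} ∈ Φ)
    (by
      intro a b a' b' ha hb
      have ha' : {i | a i = a' i} ∈ Φ := ha
      have hb' : {i | b i = b' i} ∈ Φ := hb
      apply propext
      constructor
      · intro h
        filter_upwards [h, ha', hb'] with i h1 h2 h3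
        rw [← h2, ← h3]; exact h1
      · intro h
        filter_upwards [h, ha', hb'] with i h1 h2 h3
        rw [h2, h3]; exact h1)

/-- The coordinatewise relation of the direct product. -/
def dirRel {I : Type*} {X : I → Type*} (ρ : ∀ i, X i → X i → Prop) :
    (∀ i, X i) → (∀ i, X i) → Prop := fun x y => ∀ i, ρ i (x i) (y i)

/-- A non-principal ultrafilter contains no singleton. -/
def NonPrincipal {I : Type*} (U : Ultrafilter I) : Prop := ∀ a : I, {a} ∉ U

/-- An `ω`-complete (countably complete) ultrafilter. -/
def OmegaComplete {I : Type*} (U : Ultrafilter I) : Prop :=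
  ∀ f : ℕ → Set I, (∀ n, f n ∈ U) → (⋂ n, f n) ∈ U

/-- `|I|` is less than the first measurable cardinal: no subset of `I` carries a
non-principal `ω`-complete ultrafilter. -/
def NoMeasurableLE (I : Type*) : Prop :=
  ∀ J : Set I, ∀ U : Ultrafilter J, ¬ (NonPrincipal U ∧ OmegaComplete U)

/-- The linear graph on `ω`. -/
def linRel : ℕ → ℕ → Prop := fun m n => Nat.dist m n = 1

/-! Both sides are compared through the bounded distances `dLE n`. Since a path of length
`≤ n + 1` is described by finitely many points and one of finitely many patterns of length and
orientation, Łoś's theorem holds for `dLE n`: `dLE n [x] [y]` holds in the ultraproduct iff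
`dLE n (x i) (y i)` holds for `U`-almost all `i`. Connectedness is the countable disjunction
`∃ n, dLE n`; an ultrafilter always pushes it into the factors, and `ω`-completeness is what
pulls it back out, by providing a bound `n` that works for `U`-almost all `i`. -/

open Filter

lemma pathPts_comp {X Y : Type*} (f : X → Y) {m : ℕ} (x y : X) (z : Fin m → X) :
    pathPts (f x) (f y) (f ∘ z) = f ∘ pathPts x y z := by
  simp only [pathPts, Fin.comp_cons, Fin.comp_snoc]

lemma OmegaComplete.exists_eventually {I : Type*} {U : Ultrafilter I} (hω : OmegaComplete U)
    {p : I → ℕ → Prop} (h : ∀ᶠ i in U, ∃ n, p i n) : ∃ n, ∀ᶠ i in U, p i n := by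
  by_contra! hp
  have hnot : ∀ᶠ i in U, ∀ n, ¬ p i n := by
    simpa only [Filter.Eventually, Set.ofPred_forall, Ultrafilter.mem_coe] using hω _ hp
  obtain ⟨i, ⟨n, hn⟩, hn'⟩ := (h.and hnot).exists
  exact hn' n hn

section Ultraproduct

variable {I : Type*} (U : Ultrafilter I) {X : I → Type*} (ρ : ∀ i, X i → X i → Prop)

local notation "mk" => Quotient.mk (redSetoid (U : Filter I) X)

lemma rRefl_mk_iff (u v : ∀ i, X i) :
    rRefl (redRel U ρ) (mk u) (mk v) ↔ ∀ᶠ i in U, rRefl (ρ i) (u i) (v i) := by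
  refine ⟨?_, fun h => ?_⟩
  · rintro (h | h)
    · exact mem_of_superset h fun i => Or.inl
    · exact mem_of_superset (Quotient.exact h) fun i => Or.inr
  · rcases Ultrafilter.eventually_or.mp h with h | h
    · exact Or.inl h
    · exact Or.inr (Quotient.sound h)

lemma rStep_mk_iff (e : Bool) (u v : ∀ i, X i) :
    rStep (redRel U ρ) e (mk u) (mk v) ↔ ∀ᶠ i in U, rStep (ρ i) e (u i) (v i) := by
  cases e
  · exact rRefl_mk_iff U ρ u v
  · exact rRefl_mk_iff U ρ v u

lemma isPath_mk_iff {m : ℕ} (z : Fin m → ∀ i, X i) (ε : Fin (m + 1) → Bool) (x y : ∀ i, X i) :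
    IsPath (redRel U ρ) (mk ∘ z) ε (mk x) (mk y) ↔
      ∀ᶠ i in U, IsPath (ρ i) (fun j => z j i) ε (x i) (y i) := by
  have hcoord (i : I) : pathPts (x i) (y i) (fun j => z j i) = fun k => pathPts x y z k i :=
    pathPts_comp (fun u => u i) x y z
  simp only [IsPath, pathPts_comp, Function.comp_apply, rStep_mk_iff, hcoord]
  exact eventually_all.symm

lemma dLE_mk_iff [∀ i, Nonempty (X i)] (n : ℕ) (x y : ∀ i, X i) :
    dLE (redRel U ρ) n (mk x) (mk y) ↔ ∀ᶠ i in U, dLE (ρ i) n (x i) (y i) := by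
  constructor
  · rintro ⟨m, hm, z, ε, hpath⟩
    rw [← show mk ∘ (fun j => (z j).out) = z from funext fun j => Quotient.out_eq (z j),
      isPath_mk_iff] at hpath
    exact hpath.mono fun i hi => ⟨m, hm, _, ε, hi⟩
  · intro h
    -- the length and the sign pattern of a path range over finite sets, so one choice of both
    -- works on a set in `U`
    obtain ⟨m, hm, h⟩ := (Ultrafilter.eventually_exists_mem_iff (Set.finite_Iic n)).mp h
    have h' : ∀ᶠ i in U, ∃ ε : Fin (m + 1) → Bool, ∃ z : Fin m → X i,
        IsPath (ρ i) z ε (x i) (y i) :=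
      h.mono fun i ⟨z, ε, hz⟩ => ⟨ε, z, hz⟩
    obtain ⟨ε, h⟩ := Ultrafilter.eventually_exists_iff.mp h'
    obtain ⟨z, hz⟩ := skolem.mp h
    exact ⟨m, hm, mk ∘ fun j i => z i j, ε, (isPath_mk_iff U ρ _ ε x y).mpr hz⟩

lemma conn_redRel_iff [∀ i, Nonempty (X i)] :
    Conn (redRel U ρ) ↔ ∀ x y : ∀ i, X i, ∃ n, ∀ᶠ i in U, dLE (ρ i) n (x i) (y i) := by
  simp only [Conn, Quotient.forall, dLE_mk_iff]

end Ultraproduct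

theorem stmt_10_general {I : Type*} (U : Ultrafilter I)
    (hω : OmegaComplete U) {X : I → Type*} [∀ i, Nonempty (X i)]
    (ρ : ∀ i, X i → X i → Prop) :
    Conn (redRel (U : Filter I) ρ) ↔ {i | Conn (ρ i)} ∈ U := by
  rw [conn_redRel_iff]
  constructor
  · intro h
    by_contra hnc
    have hbad : ∀ᶠ i in U, ∃ p : X i × X i, ∀ n, ¬ dLE (ρ i) n p.1 p.2 :=
      (Ultrafilter.eventually_not.mpr hnc).mono fun i hi => by simpa [Conn] using hi
    obtain ⟨p, hp⟩ := skolem.mp hbad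
    obtain ⟨n, hn⟩ := h (fun i => (p i).1) (fun i => (p i).2)
    obtain ⟨i, hi, hi'⟩ := (hn.and hp).exists
    exact hi' n hi
  · intro (h : ∀ᶠ i in U, Conn (ρ i)) x y
    exact hω.exists_eventually (h.mono fun i hi => hi (x i) (y i))

theorem stmt_10 {I : Type*} (U : Ultrafilter I) (hU : NonPrincipal U)
    (hω : OmegaComplete U) {X : I → Type*} [∀ i, Nonempty (X i)]
    (ρ : ∀ i, X i → X i → Prop) :
    Conn (redRel (U : Filter I) ρ) ↔ {i | Conn (ρ i)} ∈ U :=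
  stmt_10_general U hω ρ
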